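/- arXiv:1705.03340 — 2 statements merged into one kernel-verified Lean document; each statement's English description precedes it below -/
import Mathlib

section
/- Suppose u : C → D has both a left adjoint L and a right adjoint R. Then L is fully faithful if and only if R is fully faithful. -/
open CategoryTheory

/-- If `u : C ⥤ D` admits a left adjoint `L` and a right adjoint `R`, then
`L` is fully faithful if and only if `R` is fully faithful. -/
theorem stmt2 {C D : Type*} [Category C] [Category D]
    (u : C ⥤ D) (L R : D ⥤ C) (adjL : L ⊣ u) (adjR : u ⊣ R) :
    (L.Full ∧ L.Faithful) ↔ (R.Full ∧ R.Faithful) := by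
  constructor
  · rintro ⟨h1, h2⟩
    have h := (Adjunction.Triple.mk adjL adjR).fullyFaithfulEquiv (Functor.FullyFaithful.ofFullyFaithful L)
    exact ⟨h.full, h.faithful⟩
  · rintro ⟨h1, h2⟩
    have h := (Adjunction.Triple.mk adjL adjR).fullyFaithfulEquiv.symm (Functor.FullyFaithful.ofFullyFaithful R)
    exact ⟨h.full, h.faithful⟩
end

section
/- If C is cartesian closed and D ⊆ C is a reflective subcategory with reflector L : C → D that is closed under exponentials (for every X ∈ C and d ∈ D, the exponential d^X lies in D), then the reflector L : C → D preserves finite products. -/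
open CategoryTheory CategoryTheory.Limits MonoidalCategory

namespace Stmt17Aux

open CategoryTheory.Category CategoryTheory.CartesianClosed CategoryTheory.CartesianMonoidalCategory CategoryTheory.MonoidalClosed

universe v₁ v₂ u₁ u₂

variable {C : Type u₁} {D : Type u₂} [Category.{v₁} C] [Category.{v₂} D]

noncomputable section

def unitBij0 (i : D ⥤ C) [i.Full] [i.Faithful] (L : C ⥤ D) (adj : L ⊣ i) (A : C) (B : D) :
    (A ⟶ i.obj B) ≃ (i.obj (L.obj A) ⟶ i.obj B) :=
  (adj.homEquiv _ _).symm.trans (Functor.FullyFaithful.ofFullyFaithful i).homEquiv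

theorem unitBij0_symm_apply (i : D ⥤ C) [i.Full] [i.Faithful] (L : C ⥤ D) (adj : L ⊣ i)
    {A : C} {B : D} (f : i.obj (L.obj A) ⟶ i.obj B) :
    (unitBij0 i L adj _ _).symm f = adj.unit.app A ≫ f := by
  simp [unitBij0, Adjunction.homEquiv_unit]

def unitBij (i : D ⥤ C) [i.Full] [i.Faithful] (L : C ⥤ D) (adj : L ⊣ i)
    (A : C) {B : C} (hB : i.essImage B) :
    (A ⟶ B) ≃ (i.obj (L.obj A) ⟶ B) :=
  calc
    (A ⟶ B) ≃ (A ⟶ i.obj (Functor.essImage.witness hB)) :=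
      Iso.homCongr (Iso.refl _) (Functor.essImage.getIso hB).symm
    _ ≃ (i.obj _ ⟶ i.obj (Functor.essImage.witness hB)) := unitBij0 i L adj _ _
    _ ≃ (i.obj (L.obj A) ⟶ B) := Iso.homCongr (Iso.refl _) (Functor.essImage.getIso hB)

theorem unitBij_symm_apply (i : D ⥤ C) [i.Full] [i.Faithful] (L : C ⥤ D) (adj : L ⊣ i)
    (A : C) {B : C} (hB : i.essImage B) (f) :
    (unitBij i L adj A hB).symm f = adj.unit.app A ≫ f := by
  simp [unitBij, unitBij0_symm_apply]

theorem unitBij_symm_natural (i : D ⥤ C) [i.Full] [i.Faithful] (L : C ⥤ D) (adj : L ⊣ i)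
    (A : C) {B B' : C} (h : B ⟶ B')
    (hB : i.essImage B) (hB' : i.essImage B') (f : i.obj (L.obj A) ⟶ B) :
    (unitBij i L adj A hB').symm (f ≫ h) = (unitBij i L adj A hB).symm f ≫ h := by
  simp [unitBij_symm_apply]

theorem unitBij_natural (i : D ⥤ C) [i.Full] [i.Faithful] (L : C ⥤ D) (adj : L ⊣ i)
    (A : C) {B B' : C} (h : B ⟶ B')
    (hB : i.essImage B) (hB' : i.essImage B') (f : A ⟶ B) :
    (unitBij i L adj A hB') (f ≫ h) = unitBij i L adj A hB f ≫ h := by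
  rw [← Equiv.eq_symm_apply, unitBij_symm_natural (hB := hB), Equiv.symm_apply_apply]

variable [CartesianMonoidalCategory C] [MonoidalClosed C] [CartesianMonoidalCategory D]
  [BraidedCategory C]

theorem exp_closed (i : D ⥤ C)
    (hideal : ∀ (X : C) (d : D), i.essImage ((ihom X).obj (i.obj d)))
    {B : C} (hB : i.essImage B) (A : C) : i.essImage (A ⟹ B) := by
  rcases hB with ⟨B', ⟨iB'⟩⟩
  exact Functor.essImage.ofIso ((ihom A).mapIso iB') (hideal A B')

def bijection (i : D ⥤ C) [i.Full] [i.Faithful] (L : C ⥤ D) (adj : L ⊣ i)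
    (hideal : ∀ (X : C) (d : D), i.essImage ((ihom X).obj (i.obj d))) (A B : C) (X : D) :
    (L.obj (A ⊗ B) ⟶ X) ≃ (L.obj A ⊗ L.obj B ⟶ X) :=
  calc
    _ ≃ (A ⊗ B ⟶ i.obj X) := adj.homEquiv _ _
    _ ≃ (B ⊗ A ⟶ i.obj X) := (β_ _ _).homCongr (Iso.refl _)
    _ ≃ (A ⟶ B ⟹ i.obj X) := (ihom.adjunction _).homEquiv _ _
    _ ≃ (i.obj (L.obj A) ⟶ B ⟹ i.obj X) :=
      unitBij i L adj _ (exp_closed i hideal (i.obj_mem_essImage _) _)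
    _ ≃ (B ⊗ i.obj (L.obj A) ⟶ i.obj X) := ((ihom.adjunction _).homEquiv _ _).symm
    _ ≃ (i.obj (L.obj A) ⊗ B ⟶ i.obj X) := (β_ _ _).homCongr (Iso.refl _)
    _ ≃ (B ⟶ i.obj (L.obj A) ⟹ i.obj X) := (ihom.adjunction _).homEquiv _ _
    _ ≃ (i.obj (L.obj B) ⟶ i.obj (L.obj A) ⟹ i.obj X) :=
      unitBij i L adj _ (exp_closed i hideal (i.obj_mem_essImage _) _)
    _ ≃ (i.obj (L.obj A) ⊗ i.obj (L.obj B) ⟶ i.obj X) := ((ihom.adjunction _).homEquiv _ _).symm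
    _ ≃ (i.obj (L.obj A ⊗ L.obj B) ⟶ i.obj X) :=
      haveI : PreservesLimitsOfSize.{0, 0} i := adj.rightAdjoint_preservesLimits
      Iso.homCongr (prodComparisonIso i _ _).symm (Iso.refl (i.obj X))
    _ ≃ (L.obj A ⊗ L.obj B ⟶ X) := (Functor.FullyFaithful.ofFullyFaithful i).homEquiv.symm

theorem bijection_symm_apply_id (i : D ⥤ C) [i.Full] [i.Faithful] (L : C ⥤ D) (adj : L ⊣ i)
    (hideal : ∀ (X : C) (d : D), i.essImage ((ihom X).obj (i.obj d))) (A B : C) :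
    (bijection i L adj hideal A B _).symm (𝟙 _) = CartesianMonoidalCategory.prodComparison L A B := by
  dsimp [bijection]
  simp only [Iso.homCongr_apply, Iso.homCongr_symm, Iso.symm_symm_eq, Iso.refl_symm, Iso.refl_hom,
    Iso.refl_inv, Iso.symm_hom, Iso.symm_inv, Functor.FullyFaithful.homEquiv_apply,
    Functor.FullyFaithful.homEquiv_symm_apply]
  erw [homEquiv_symm_apply_eq, homEquiv_symm_apply_eq, homEquiv_apply_eq, homEquiv_apply_eq]
  rw [Category.comp_id, Category.comp_id, Category.comp_id, i.map_id, Category.comp_id, unitBij_symm_apply,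
    unitBij_symm_apply, uncurry_natural_left, uncurry_curry,
    uncurry_natural_left, uncurry_curry, ← BraidedCategory.braiding_naturality_left_assoc]
  erw [SymmetricCategory.symmetry_assoc, ← MonoidalCategory.whisker_exchange_assoc]
  dsimp only [Functor.comp_obj]
  rw [← tensorHom_def'_assoc, Adjunction.homEquiv_symm_apply,
    ← Adjunction.eq_unit_comp_map_iff, Iso.comp_inv_eq, Category.assoc]
  haveI : PreservesLimitsOfSize.{0, 0} i := adj.rightAdjoint_preservesLimits
  rw [prodComparisonIso_hom i (L.obj A) (L.obj B)]
  apply CartesianMonoidalCategory.hom_ext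
  · rw [tensorHom_fst, Category.assoc, Category.assoc, CartesianMonoidalCategory.prodComparison_fst, ← i.map_comp,
      CartesianMonoidalCategory.prodComparison_fst]
    apply adj.unit.naturality
  · rw [tensorHom_snd, Category.assoc, Category.assoc, CartesianMonoidalCategory.prodComparison_snd, ← i.map_comp,
      CartesianMonoidalCategory.prodComparison_snd]
    apply adj.unit.naturality

theorem bijection_natural (i : D ⥤ C) [i.Full] [i.Faithful] (L : C ⥤ D) (adj : L ⊣ i)
    (hideal : ∀ (X : C) (d : D), i.essImage ((ihom X).obj (i.obj d)))
    (A B : C) (X X' : D) (f : L.obj (A ⊗ B) ⟶ X) (g : X ⟶ X') :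
    bijection i L adj hideal _ _ _ (f ≫ g) = bijection i L adj hideal _ _ _ f ≫ g := by
  dsimp [bijection]
  simp only [Iso.homCongr_apply, Iso.homCongr_symm, Iso.symm_symm_eq, Iso.refl_symm, Iso.refl_hom,
    Iso.refl_inv, Iso.symm_hom, Iso.symm_inv, Functor.FullyFaithful.homEquiv_apply,
    Functor.FullyFaithful.homEquiv_symm_apply]
  erw [homEquiv_symm_apply_eq, homEquiv_symm_apply_eq, homEquiv_apply_eq, homEquiv_apply_eq,
    homEquiv_symm_apply_eq, homEquiv_symm_apply_eq, homEquiv_apply_eq, homEquiv_apply_eq]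
  apply i.map_injective
  erw [Functor.FullyFaithful.map_preimage, i.map_comp,
    Adjunction.homEquiv_unit, Adjunction.homEquiv_unit]
  simp only [Category.comp_id, Functor.map_comp, Functor.FullyFaithful.map_preimage, Category.assoc]
  rw [← Category.assoc, ← Category.assoc, curry_natural_right _ (i.map g),
    unitBij_natural, uncurry_natural_right, ← Category.assoc, curry_natural_right,
    unitBij_natural, uncurry_natural_right, Category.assoc]

theorem prodComparison_iso (i : D ⥤ C) [i.Full] [i.Faithful] (L : C ⥤ D) (adj : L ⊣ i)
    (hideal : ∀ (X : C) (d : D), i.essImage ((ihom X).obj (i.obj d))) (A B : C) :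
    IsIso (CartesianMonoidalCategory.prodComparison L A B) :=
  ⟨⟨bijection i L adj hideal _ _ _ (𝟙 _), by
      rw [← (bijection i L adj hideal _ _ _).injective.eq_iff, bijection_natural,
        ← bijection_symm_apply_id i L adj hideal, Equiv.apply_symm_apply, Category.id_comp],
      by rw [← bijection_natural, Category.id_comp, ← bijection_symm_apply_id i L adj hideal,
        Equiv.apply_symm_apply]⟩⟩

end
end Stmt17Aux

/-- If `C` is cartesian closed and `D ⊆ C` is a reflective subcategory (given by a fully
faithful inclusion `i` with reflector `L ⊣ i`) which is an exponential ideal (for every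
`X : C` and `d : D`, the exponential `d^X` lies in `D`), then the reflector `L` preserves
binary products: the canonical map `L(X × Y) ⟶ L X × L Y` is an isomorphism. -/
theorem stmt17 {C D : Type*} [Category C] [Category D]
    [CartesianMonoidalCategory C] [MonoidalClosed C] [CartesianMonoidalCategory D]
    (i : D ⥤ C) [i.Full] [i.Faithful] (L : C ⥤ D) (adj : L ⊣ i)
    (hideal : ∀ (X : C) (d : D), i.essImage ((ihom X).obj (i.obj d)))
    (X Y : C) :
    IsIso (CartesianMonoidalCategory.lift
      (L.map (CartesianMonoidalCategory.fst X Y)) (L.map (CartesianMonoidalCategory.snd X Y)) :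
      L.obj (X ⊗ Y) ⟶ L.obj X ⊗ L.obj Y) := by
  letI : BraidedCategory C := BraidedCategory.ofCartesianMonoidalCategory
  exact Stmt17Aux.prodComparison_iso i L adj hideal X Y
end
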